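/- Let r ∈ ℤ_{≥0}, λ ∈ ℂ*, α ∈ ℂ, and let V be an irreducible L̄_r-module. Then the Virasoro module M(V,Ω(λ,α)) is reducible (has a submodule other than 0 and the whole space) if and only if V is isomorphic to V_α, i.e. V is one-dimensional with B_0 = α·id and B_i = 0 for 1 ≤ i ≤ r. -/

import Mathlib

open TensorProduct

/-- Substitution `X ↦ X - k` on `ℂ[X]`. -/
noncomputable def shiftP (k : ℂ) : Polynomial ℂ →ₗ[ℂ] Polynomial ℂ :=
  (Polynomial.aeval (Polynomial.X - Polynomial.C k)).toLinearMap

/-- The operator `L_k` on `Ω(λ,α) = ℂ[X]`: `L_k f(X) = λ^k (X - kα) f(X - k)`. -/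
noncomputable def omegaL (lam al : ℂ) (k : ℤ) : Polynomial ℂ →ₗ[ℂ] Polynomial ℂ :=
  (lam ^ k) •
    ((LinearMap.mulLeft ℂ (Polynomial.X - Polynomial.C ((k : ℂ) * al))).comp (shiftP (k : ℂ)))

/-- The operator `L_k` on the Virasoro module `M(V,Ω(λ,α)) = V ⊗ ℂ[X]`:
`L_k (v ⊗ f) = v ⊗ λ^k (X - kα) f(X - k)
  + ∑_{j=0}^r (k^{j+1}/(j+1)!) B_j v ⊗ λ^k f(X - k)`. -/
noncomputable def M1Op {V : Type*} [AddCommGroup V] [Module ℂ V]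
    (B : ℕ → V →ₗ[ℂ] V) (r : ℕ) (lam al : ℂ) (k : ℤ) :
    V ⊗[ℂ] Polynomial ℂ →ₗ[ℂ] V ⊗[ℂ] Polynomial ℂ :=
  TensorProduct.map LinearMap.id (omegaL lam al k) +
  ∑ j ∈ Finset.range (r + 1),
    (((k : ℂ) ^ (j + 1)) / ((j + 1).factorial : ℂ)) •
      TensorProduct.map (B j) ((lam ^ k) • shiftP (k : ℂ))

/-!
Up to the factor `λ^k`, the operator `L_k` is a polynomial in `k` whose coefficients are operators
on `V ⊗ ℂ[X]`: it sends `v ⊗ f` to `v ⊗ X f(X-k) + ∑_j k^{j+1}/(j+1)! B'_j v ⊗ f(X-k)`, where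
`B'_0 = B_0 - α` and `B'_j = B_j` for `j ≥ 1`. By a Vandermonde argument, a submodule `N` is stable
under every coefficient. Since `L_0` is multiplication by `X`, `N` is everything once it contains
`V ⊗ 1`; the coefficient of `k^{i+1}` sends `w ⊗ 1` to `B'_i w/(i+1)! ⊗ 1`, so `{w | w ⊗ 1 ∈ N}`
is an `L̄_r`-submodule, and it is `0` when `N` is proper. If `v ⊗ X^d` is the leading term of some
nonzero `x ∈ N` and `B_j = 0` for `j > s`, then the coefficient of `k^{d+s+1}` sends `x` to
`± B'_s v/(s+1)! ⊗ 1`, so `B'_s v = 0`. Descending from `s = r`, the kernel of `B_s` is then a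
nonzero submodule, so `B_s = 0` for `s ≥ 1`; finally `B_0 v = α v` makes `ℂ v` a submodule, hence
`V = ℂ v ≅ V_α`. Conversely, on `V_α` we get `L_k (v ⊗ f) = λ^k v ⊗ X f(X-k)`, which preserves the
proper submodule `V ⊗ X ℂ[X]`.
-/

open Polynomial Finset

theorem Submodule.mem_of_forall_sum_pow_smul_mem {K W : Type*} [Field K] [CharZero K]
    [AddCommGroup W] [Module K W] (N : Submodule K W) {n : ℕ} {y : ℕ → W}
    (h : ∀ k : ℕ, ∑ m ∈ range n, (k : K) ^ m • y m ∈ N) {m : ℕ} (hm : m < n) : y m ∈ N := by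
  rw [← Submodule.Quotient.mk_eq_zero, ← Module.forall_dual_apply_eq_zero_iff K]
  intro φ
  let p : K[X] := ∑ m ∈ range n, C (φ (N.mkQ (y m))) * X ^ m
  have hroot : ∀ k : ℕ, p.IsRoot k := fun k => by
    have : φ (N.mkQ (∑ m ∈ range n, (k : K) ^ m • y m)) = 0 := by
      rw [Submodule.mkQ_apply, (Submodule.Quotient.mk_eq_zero N).mpr (h k), map_zero]
    simp only [map_sum, map_smul, smul_eq_mul] at this
    simp only [IsRoot, p, eval_finsetSum, eval_mul, eval_C, eval_pow, eval_X, ← this]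
    exact sum_congr rfl fun _ _ => mul_comm _ _
  have hp : p = 0 := p.eq_zero_of_infinite_isRoot <|
    (Set.infinite_range_of_injective Nat.cast_injective).mono (by rintro _ ⟨k, rfl⟩; exact hroot k)
  simpa [p, finsetSum_coeff, coeff_C_mul_X_pow, hm] using congrArg (coeff · m) hp

theorem exists_lTensor_leval_eq_sum {R A W : Type*} [CommRing R] [CommRing A] [Algebra R A]
    [AddCommGroup W] [Module R W] (z : W ⊗[R] A[X]) :
    ∃ n₀, ∀ n, n₀ ≤ n → ∀ k : R,
      LinearMap.lTensor W ((leval (algebraMap R A k)).restrictScalars R) z =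
        ∑ m ∈ range n, k ^ m • LinearMap.lTensor W ((lcoeff A m).restrictScalars R) z := by
  induction z using TensorProduct.induction_on with
  | zero => exact ⟨0, fun _ _ _ => by simp⟩
  | tmul v G =>
    refine ⟨G.natDegree + 1, fun n hn k => ?_⟩
    simp only [LinearMap.lTensor_tmul, LinearMap.restrictScalars_apply, leval_apply, lcoeff_apply,
      ← tmul_smul, ← tmul_sum, eval_eq_sum_range' (Nat.lt_of_succ_le hn), Algebra.smul_def,
      map_pow, mul_comm]
  | add x y hx hy =>
    obtain ⟨nx, hx⟩ := hx
    obtain ⟨ny, hy⟩ := hy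
    exact ⟨max nx ny, fun n hn k => by
      simp only [map_add, smul_add, sum_add_distrib, hx n (le_of_max_le_left hn),
        hy n (le_of_max_le_right hn)]⟩

theorem lTensor_lcoeff_mem_of_forall_lTensor_leval_mem {K A W : Type*} [Field K] [CharZero K]
    [CommRing A] [Algebra K A] [AddCommGroup W] [Module K W] (N : Submodule K (W ⊗[K] A))
    {z : W ⊗[K] A[X]}
    (h : ∀ k : ℕ, LinearMap.lTensor W ((leval (algebraMap K A k)).restrictScalars K) z ∈ N)
    (m : ℕ) : LinearMap.lTensor W ((lcoeff A m).restrictScalars K) z ∈ N := by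
  obtain ⟨n₀, hn₀⟩ := exists_lTensor_leval_eq_sum z
  exact N.mem_of_forall_sum_pow_smul_mem (fun k => hn₀ (max n₀ (m + 1)) le_sup_left k ▸ h k)
    (Nat.lt_succ_self m |>.trans_le le_sup_right)

namespace Polynomial

theorem natDegree_C_sub_X_le {R : Type*} [CommRing R] (a : R) : (C a - X).natDegree ≤ 1 := by
  compute_degree

theorem coeff_C_sub_X_pow {R : Type*} [CommRing R] (a : R) {i n : ℕ} (h : i ≤ n) :
    ((C a - X) ^ i).coeff n = if n = i then (-1) ^ i else 0 := by
  split_ifs with hn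
  · subst hn
    simpa using coeff_pow_of_natDegree_le (m := n) (natDegree_C_sub_X_le a)
  · exact coeff_eq_zero_of_natDegree_lt
      ((natDegree_pow_le_of_le i (natDegree_C_sub_X_le a)).trans_lt (by omega))

end Polynomial

noncomputable section

-- In `ℂ[X][X]` the inner variable is the `X` of `ℂ[X]` and the outer one stands for `k`.
def shiftPoly : ℂ[X] →ₐ[ℂ] ℂ[X][X] := aeval (C X - X)

theorem eval_shiftPoly (k : ℂ) (f : ℂ[X]) : (shiftPoly f).eval (C k) = shiftP k f := by
  induction f using Polynomial.induction_on with
  | C a => simp [shiftPoly, shiftP]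
  | add p q hp hq => simp_all [shiftPoly, shiftP]
  | monomial n a _ => simp [shiftPoly, shiftP]

theorem shiftPoly_X_pow (i : ℕ) : shiftPoly (X ^ i) = (C X - X) ^ i := by
  simp [shiftPoly]

section M1

variable {V : Type*} [AddCommGroup V] [Module ℂ V]

def shiftedB (B : ℕ → V →ₗ[ℂ] V) (al : ℂ) (j : ℕ) : V →ₗ[ℂ] V :=
  if j = 0 then B 0 - al • LinearMap.id else B j

theorem sum_smul_shiftedB (B : ℕ → V →ₗ[ℂ] V) (al : ℂ) (r : ℕ) (c : ℕ → ℂ) (v : V) :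
    ∑ j ∈ range (r + 1), c j • shiftedB B al j v
      = ∑ j ∈ range (r + 1), c j • B j v - (c 0 * al) • v := by
  simp only [sum_range_succ' _ r, shiftedB, if_pos, LinearMap.sub_apply, LinearMap.smul_apply,
    LinearMap.id_apply, smul_sub, smul_smul, Nat.succ_ne_zero, if_false]
  abel

def M1Poly (B : ℕ → V →ₗ[ℂ] V) (r : ℕ) (al : ℂ) : V ⊗[ℂ] ℂ[X] →ₗ[ℂ] V ⊗[ℂ] ℂ[X][X] :=
  LinearMap.lTensor V (LinearMap.mulLeft ℂ (C X) ∘ₗ shiftPoly.toLinearMap) +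
    ∑ j ∈ range (r + 1), ((j + 1).factorial : ℂ)⁻¹ •
      TensorProduct.map (shiftedB B al j)
        (LinearMap.mulLeft ℂ (X ^ (j + 1)) ∘ₗ shiftPoly.toLinearMap)

def M1Coeff (B : ℕ → V →ₗ[ℂ] V) (r : ℕ) (al : ℂ) (m : ℕ) : V ⊗[ℂ] ℂ[X] →ₗ[ℂ] V ⊗[ℂ] ℂ[X] :=
  LinearMap.lTensor V ((lcoeff ℂ[X] m).restrictScalars ℂ) ∘ₗ M1Poly B r al

theorem M1Op_eq (B : ℕ → V →ₗ[ℂ] V) (r : ℕ) (lam al : ℂ) (k : ℤ) :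
    M1Op B r lam al k = lam ^ k •
      (LinearMap.lTensor V ((leval (algebraMap ℂ ℂ[X] k)).restrictScalars ℂ) ∘ₗ M1Poly B r al) := by
  refine TensorProduct.ext' fun v f => ?_
  simp only [M1Op, M1Poly, omegaL, LinearMap.add_apply, LinearMap.sum_apply, LinearMap.smul_apply,
    LinearMap.comp_apply, map_tmul, LinearMap.lTensor_tmul, LinearMap.id_apply, map_add, map_sum,
    map_smul, LinearMap.mulLeft_apply, AlgHom.toLinearMap_apply, LinearMap.restrictScalars_apply,
    leval_apply, algebraMap_eq, eval_mul, eval_C, eval_pow, eval_X, eval_shiftPoly]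
  set σ := shiftP (k : ℂ) f
  have hsum : ∑ j ∈ range (r + 1),
      ((j + 1).factorial : ℂ)⁻¹ • shiftedB B al j v ⊗ₜ[ℂ] (C (k : ℂ) ^ (j + 1) * σ) =
        (∑ j ∈ range (r + 1), ((k : ℂ) ^ (j + 1) / (j + 1).factorial) • B j v
          - ((k : ℂ) * al) • v) ⊗ₜ σ := by
    simp only [← C_pow, ← smul_eq_C_mul, tmul_smul, smul_smul, smul_tmul', ← sum_tmul]
    rw [sum_smul_shiftedB]
    simp [div_eq_inv_mul]
  rw [hsum]
  simp only [sub_mul, ← smul_eq_C_mul, tmul_smul, tmul_sub, smul_tmul', sub_tmul, sum_tmul,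
    smul_add, smul_sub, smul_sum, smul_smul, mul_comm]
  abel

theorem M1Op_zero (B : ℕ → V →ₗ[ℂ] V) (r : ℕ) (lam al : ℂ) :
    M1Op B r lam al 0 = LinearMap.lTensor V (LinearMap.mulLeft ℂ X) :=
  TensorProduct.ext' fun v f => by simp [M1Op, omegaL, shiftP]

theorem M1Op_tmul_of_shiftedB_eq_zero {B : ℕ → V →ₗ[ℂ] V} {r : ℕ} {al : ℂ}
    (hB : ∀ j ≤ r, shiftedB B al j = 0) (lam : ℂ) (k : ℤ) (v : V) (f : ℂ[X]) :
    M1Op B r lam al k (v ⊗ₜ f) = lam ^ k • (v ⊗ₜ (X * shiftP k f)) := by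
  rw [M1Op_eq, M1Poly, sum_eq_zero fun j hj => by
    rw [hB j (Nat.lt_succ_iff.mp (mem_range.mp hj))]; simp, add_zero]
  simp only [LinearMap.smul_apply, LinearMap.comp_apply, LinearMap.lTensor_tmul,
    LinearMap.restrictScalars_apply, leval_apply, AlgHom.toLinearMap_apply, LinearMap.mulLeft_apply,
    eval_mul, eval_C, algebraMap_eq, eval_shiftPoly]

theorem M1Coeff_tmul_X_pow (B : ℕ → V →ₗ[ℂ] V) (r : ℕ) (al : ℂ) {s d i : ℕ} (hs : s ≤ r)
    (hB : ∀ j, s < j → j ≤ d + s → B j = 0) (hi : i ≤ d) (v : V) :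
    M1Coeff B r al (d + s + 1) (v ⊗ₜ[ℂ] ((X : ℂ[X]) ^ i)) =
      if i = d then ((-1) ^ d * ((s + 1).factorial : ℂ)⁻¹) • (shiftedB B al s v ⊗ₜ[ℂ] (1 : ℂ[X]))
      else 0 := by
  simp only [M1Coeff, M1Poly, LinearMap.comp_apply, LinearMap.add_apply, LinearMap.sum_apply,
    LinearMap.smul_apply, LinearMap.lTensor_tmul, map_tmul, map_add, map_sum, map_smul,
    LinearMap.mulLeft_apply, AlgHom.toLinearMap_apply, shiftPoly_X_pow,
    LinearMap.restrictScalars_apply, lcoeff_apply, coeff_C_mul, coeff_X_pow_mul']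
  rw [coeff_C_sub_X_pow _ (by omega), if_neg (by omega), mul_zero, tmul_zero, zero_add,
    sum_eq_single_of_mem s (mem_range.mpr (by omega))]
  · rw [if_pos (by omega), show d + s + 1 - (s + 1) = d by omega, coeff_C_sub_X_pow _ hi]
    split_ifs with h1 h2 h2
    · subst h2
      rw [show ((-1 : ℂ[X]) ^ i) = ((-1 : ℂ) ^ i) • (1 : ℂ[X]) by
          rw [smul_eq_C_mul, mul_one, C_pow, C_neg, C_1], tmul_smul, smul_smul, mul_comm]
    · omega
    · omega
    · simp
  · intro j _ hjs
    split_ifs with hj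
    · rcases lt_or_gt_of_ne hjs with hjs | hjs
      · rw [coeff_C_sub_X_pow _ (by omega), if_neg (by omega), tmul_zero, smul_zero]
      · rw [shiftedB, if_neg (by omega), hB j hjs (by omega)]
        simp
    · simp

def tensorCoeff : V ⊗[ℂ] ℂ[X] ≃ₗ[ℂ] ℕ →₀ V := equivFinsuppOfBasisRight (basisMonomials ℂ)

theorem tensorCoeff_tmul (v : V) (f : ℂ[X]) (n : ℕ) : tensorCoeff (v ⊗ₜ f) n = f.coeff n • v := by
  simp only [tensorCoeff, equivFinsuppOfBasisRight_apply_tmul_apply]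
  rfl

theorem tensorCoeff_symm (c : ℕ →₀ V) :
    tensorCoeff.symm c = c.sum fun i w => w ⊗ₜ[ℂ] ((X : ℂ[X]) ^ i) := by
  simp [tensorCoeff, X_pow_eq_monomial]

def IsLbarInvariant (B : ℕ → V →ₗ[ℂ] V) (r : ℕ) (U : Submodule ℂ V) : Prop :=
  ∀ i, i ≤ r → ∀ w ∈ U, B i w ∈ U

def IsLbarIrreducible (B : ℕ → V →ₗ[ℂ] V) (r : ℕ) : Prop :=
  ∀ U : Submodule ℂ V, IsLbarInvariant B r U → U = ⊥ ∨ U = ⊤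

theorem IsLbarIrreducible.eq_top {B : ℕ → V →ₗ[ℂ] V} {r : ℕ} (hV : IsLbarIrreducible B r)
    {U : Submodule ℂ V} (hU : IsLbarInvariant B r U) {v : V} (hv : v ∈ U) (hv0 : v ≠ 0) :
    U = ⊤ :=
  (hV U hU).resolve_left fun h => hv0 (by simpa [h] using hv)

def IsM1Invariant (B : ℕ → V →ₗ[ℂ] V) (r : ℕ) (lam al : ℂ) (N : Submodule ℂ (V ⊗[ℂ] ℂ[X])) :
    Prop :=
  ∀ k : ℤ, ∀ x ∈ N, M1Op B r lam al k x ∈ N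

section Reducible

variable {B : ℕ → V →ₗ[ℂ] V} {r : ℕ} {lam al : ℂ} {N : Submodule ℂ (V ⊗[ℂ] ℂ[X])}

theorem IsM1Invariant.M1Coeff_mem (hN : IsM1Invariant B r lam al N) (hlam : lam ≠ 0)
    {x : V ⊗[ℂ] ℂ[X]} (hx : x ∈ N) (m : ℕ) : M1Coeff B r al m x ∈ N := by
  refine lTensor_lcoeff_mem_of_forall_lTensor_leval_mem N (fun k => ?_) m
  have := hN k x hx
  rwa [M1Op_eq, LinearMap.smul_apply, Submodule.smul_mem_iff _ (zpow_ne_zero _ hlam),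
    Int.cast_natCast] at this

theorem IsM1Invariant.eq_top_of_forall_tmul_one_mem (hN : IsM1Invariant B r lam al N)
    (h1 : ∀ w : V, w ⊗ₜ 1 ∈ N) : N = ⊤ := by
  have hX : ∀ f : ℂ[X], ∀ w : V, w ⊗ₜ f ∈ N := by
    intro f
    induction f using Polynomial.induction_on with
    | C a => intro w; rw [← mul_one (C a), ← smul_eq_C_mul, tmul_smul]; exact N.smul_mem a (h1 w)
    | add p q hp hq => intro w; rw [tmul_add]; exact N.add_mem (hp w) (hq w)
    | monomial n a ih =>
      intro w
      have := hN 0 _ (ih w)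
      rwa [M1Op_zero, LinearMap.lTensor_tmul, LinearMap.mulLeft_apply,
        show X * (C a * X ^ n) = C a * X ^ (n + 1) by ring] at this
  refine Submodule.eq_top_iff'.mpr fun x => ?_
  induction x using TensorProduct.induction_on with
  | zero => exact N.zero_mem
  | tmul w f => exact hX f w
  | add x y hx hy => exact N.add_mem hx hy

theorem IsM1Invariant.eq_zero_of_tmul_one_mem (hN : IsM1Invariant B r lam al N) (hlam : lam ≠ 0)
    (hNtop : N ≠ ⊤) (hV : IsLbarIrreducible B r) {w : V} (hw : w ⊗ₜ 1 ∈ N) : w = 0 := by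
  let W : Submodule ℂ V := N.comap ((TensorProduct.mk ℂ V ℂ[X]).flip 1)
  have hW : IsLbarInvariant B r W := by
    intro i hi u (hu : u ⊗ₜ 1 ∈ N)
    have hc := hN.M1Coeff_mem hlam hu (0 + i + 1)
    rw [← pow_zero (X : ℂ[X]), M1Coeff_tmul_X_pow B r al hi (by omega) le_rfl, if_pos rfl,
      Submodule.smul_mem_iff _ (by simp [Nat.factorial_ne_zero])] at hc
    change shiftedB B al i u ∈ W at hc
    unfold shiftedB at hc
    split_ifs at hc with hi0
    · subst hi0
      exact (W.sub_mem_iff_left (W.smul_mem al hu)).mp (by simpa using hc)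
    · exact hc
  by_contra hw0
  exact hNtop (hN.eq_top_of_forall_tmul_one_mem fun v =>
    show v ∈ W by rw [hV.eq_top hW hw hw0]; trivial)

theorem IsM1Invariant.exists_ne_zero_shiftedB_eq_zero (hN : IsM1Invariant B r lam al N)
    (hlam : lam ≠ 0) (hNbot : N ≠ ⊥) (hNtop : N ≠ ⊤) (hV : IsLbarIrreducible B r) :
    ∃ v : V, v ≠ 0 ∧ ∀ s ≤ r, (∀ j, s < j → B j = 0) → shiftedB B al s v = 0 := by
  obtain ⟨x, hx, hx0⟩ := (Submodule.ne_bot_iff N).mp hNbot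
  set c := tensorCoeff x
  have hc : c.support.Nonempty := Finsupp.support_nonempty_iff.mpr (by simpa [c] using hx0)
  set d := c.support.max' hc
  refine ⟨c d, Finsupp.mem_support_iff.mp (c.support.max'_mem hc), fun s hs hB => ?_⟩
  have hlead : M1Coeff B r al (d + s + 1) x
      = ((-1) ^ d * ((s + 1).factorial : ℂ)⁻¹) • (shiftedB B al s (c d) ⊗ₜ[ℂ] (1 : ℂ[X])) := by
    rw [← tensorCoeff.symm_apply_apply x, tensorCoeff_symm, Finsupp.sum, map_sum,
      sum_eq_single_of_mem d (c.support.max'_mem hc)]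
    · rw [M1Coeff_tmul_X_pow B r al hs (fun j hj _ => hB j hj) le_rfl, if_pos rfl]
    · intro i hi hid
      rw [M1Coeff_tmul_X_pow B r al hs (fun j hj _ => hB j hj) (c.support.le_max' i hi),
        if_neg hid]
  have hmem := hN.M1Coeff_mem hlam hx (d + s + 1)
  rw [hlead, Submodule.smul_mem_iff _ (by simp [Nat.factorial_ne_zero])] at hmem
  exact hN.eq_zero_of_tmul_one_mem hlam hNtop hV hmem

end Reducible

theorem exists_isM1Invariant_of_shiftedB_eq_zero {B : ℕ → V →ₗ[ℂ] V} {r : ℕ} {al : ℂ}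
    (hB : ∀ j ≤ r, shiftedB B al j = 0) {v : V} (hv0 : v ≠ 0) (lam : ℂ) :
    ∃ N, IsM1Invariant B r lam al N ∧ N ≠ ⊥ ∧ N ≠ ⊤ := by
  let E : V ⊗[ℂ] ℂ[X] →ₗ[ℂ] V := Finsupp.lapply 0 ∘ₗ tensorCoeff.toLinearMap
  have hE : ∀ (w : V) (f : ℂ[X]), E (w ⊗ₜ f) = f.coeff 0 • w := tensorCoeff_tmul (n := 0)
  have hEM : ∀ (k : ℤ) x, E (M1Op B r lam al k x) = 0 := by
    intro k x
    induction x using TensorProduct.induction_on with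
    | zero => simp
    | tmul w f => simp [M1Op_tmul_of_shiftedB_eq_zero hB, hE]
    | add x y hx hy => rw [map_add, map_add, hx, hy, add_zero]
  refine ⟨LinearMap.ker E, fun k x _ => hEM k x, ?_, ?_⟩
  · refine (Submodule.ne_bot_iff _).mpr ⟨v ⊗ₜ X, by simp [hE], fun h => hv0 ?_⟩
    simpa [tensorCoeff_tmul] using congrArg (fun x => tensorCoeff x 1) h
  · intro h
    have : v ⊗ₜ[ℂ] (1 : ℂ[X]) ∈ LinearMap.ker E := h ▸ Submodule.mem_top
    exact hv0 (by simpa [hE] using this)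

section Lbar

variable {B : ℕ → V →ₗ[ℂ] V} {r : ℕ} {al : ℂ}

theorem isLbarInvariant_ker
    (hBrel : ∀ i j, i ≤ r → j ≤ r →
      B i ∘ₗ B j - B j ∘ₗ B i = (((j : ℂ) - (i : ℂ)) • B (i + j) : V →ₗ[ℂ] V))
    {s : ℕ} (hs : s ≤ r) (hB : ∀ j, s < j → B j = 0) :
    IsLbarInvariant B r (LinearMap.ker (B s)) := by
  intro i hi u (hu : B s u = 0)
  have hrel := LinearMap.congr_fun (hBrel i s hi hs) u
  have hz : B (i + s) u = 0 := by
    rcases Nat.eq_zero_or_pos i with rfl | hi0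
    · simpa using hu
    · rw [hB _ (by omega), LinearMap.zero_apply]
  simpa [hu, hz] using hrel

theorem B_eq_zero_of_one_le (hBtop : ∀ i, r < i → B i = 0)
    (hBrel : ∀ i j, i ≤ r → j ≤ r →
      B i ∘ₗ B j - B j ∘ₗ B i = (((j : ℂ) - (i : ℂ)) • B (i + j) : V →ₗ[ℂ] V))
    (hV : IsLbarIrreducible B r) {v : V} (hv0 : v ≠ 0)
    (hv : ∀ s ≤ r, (∀ j, s < j → B j = 0) → shiftedB B al s v = 0) :
    ∀ j, 1 ≤ j → B j = 0 := by
  suffices h : ∀ n j, 1 ≤ j → r < j + n → B j = 0 from fun j hj => h (r + 1) j hj (by omega)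
  intro n
  induction n with
  | zero => exact fun j _ hj => hBtop j hj
  | succ n ih =>
    intro j hj hjn
    by_cases h : r < j + n
    · exact ih j hj h
    have hgt : ∀ i, j < i → B i = 0 := fun i hi => ih i (by omega) (by omega)
    have hvj : B j v = 0 := by
      simpa [shiftedB, Nat.one_le_iff_ne_zero.mp hj] using hv j (by omega) hgt
    exact LinearMap.ker_eq_top.mp (hV.eq_top (isLbarInvariant_ker hBrel (by omega) hgt) hvj hv0)

theorem exists_linearEquiv_of_eigenvector (hV : IsLbarIrreducible B r) {v : V} (hv0 : v ≠ 0)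
    (hB0 : B 0 v = al • v) (hB : ∀ j, 1 ≤ j → B j = 0) :
    ∃ e : V ≃ₗ[ℂ] ℂ, (∀ w : V, e (B 0 w) = al * e w) ∧
      ∀ i, 1 ≤ i → i ≤ r → ∀ w : V, e (B i w) = 0 := by
  have hB0' : ∀ a : ℂ, B 0 (a • v) = al • a • v := fun a => by rw [map_smul, hB0, smul_comm]
  have hspan : (ℂ ∙ v) = ⊤ := by
    refine hV.eq_top (fun i _ w hw => ?_) (Submodule.mem_span_singleton_self v) hv0
    obtain ⟨a, rfl⟩ := Submodule.mem_span_singleton.mp hw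
    rcases Nat.eq_zero_or_pos i with rfl | hi
    · rw [hB0']
      exact Submodule.smul_mem _ _ hw
    · rw [hB i hi, LinearMap.zero_apply]
      exact Submodule.zero_mem _
  let e := ((LinearEquiv.toSpanNonzeroSingleton ℂ V v hv0).trans (LinearEquiv.ofTop _ hspan)).symm
  refine ⟨e, fun w => ?_, fun i hi _ w => by rw [hB i hi, LinearMap.zero_apply, map_zero]⟩
  obtain ⟨a, rfl⟩ := Submodule.mem_span_singleton.mp (hspan ▸ Submodule.mem_top (x := w))
  rw [hB0', map_smul, smul_eq_mul]

theorem shiftedB_eq_zero_of_linearEquiv (e : V ≃ₗ[ℂ] ℂ) (he0 : ∀ w : V, e (B 0 w) = al * e w)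
    (he : ∀ i, 1 ≤ i → i ≤ r → ∀ w : V, e (B i w) = 0) : ∀ j ≤ r, shiftedB B al j = 0 := by
  intro j hj
  ext w
  apply e.injective
  rcases Nat.eq_zero_or_pos j with rfl | hj0
  · simp [shiftedB, he0]
  · simp [shiftedB, hj0.ne', he j hj0 hj]

end Lbar

end M1

end

theorem statement12_general {V : Type*} [AddCommGroup V] [Module ℂ V]
    (r : ℕ) (lam al : ℂ) (hlam : lam ≠ 0)
    (B : ℕ → V →ₗ[ℂ] V)
    (hBtop : ∀ i, r < i → B i = 0)
    (hBrel : ∀ i j, i ≤ r → j ≤ r →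
      B i ∘ₗ B j - B j ∘ₗ B i = (((j : ℂ) - (i : ℂ)) • B (i + j) : V →ₗ[ℂ] V))
    (hVirr : ∀ U : Submodule ℂ V, (∀ i, i ≤ r → ∀ w ∈ U, B i w ∈ U) → U = ⊥ ∨ U = ⊤) :
    (∃ N : Submodule ℂ (V ⊗[ℂ] Polynomial ℂ),
        (∀ k : ℤ, ∀ x ∈ N, M1Op B r lam al k x ∈ N) ∧ N ≠ ⊥ ∧ N ≠ ⊤)
    ↔ (∃ e : V ≃ₗ[ℂ] ℂ, (∀ w : V, e (B 0 w) = al * e w) ∧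
        ∀ i, 1 ≤ i → i ≤ r → ∀ w : V, e (B i w) = 0) := by
  constructor
  · rintro ⟨N, hN, hNbot, hNtop⟩
    obtain ⟨v, hv0, hv⟩ := IsM1Invariant.exists_ne_zero_shiftedB_eq_zero hN hlam hNbot hNtop hVirr
    have hB := B_eq_zero_of_one_le hBtop hBrel hVirr hv0 hv
    have hB0 : B 0 v = al • v :=
      sub_eq_zero.mp (by simpa [shiftedB] using hv 0 (Nat.zero_le r) fun j hj => hB j hj)
    exact exists_linearEquiv_of_eigenvector hVirr hv0 hB0 hB
  · rintro ⟨e, he0, he⟩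
    exact exists_isM1Invariant_of_shiftedB_eq_zero (shiftedB_eq_zero_of_linearEquiv e he0 he)
      (e.symm.map_ne_zero_iff.mpr one_ne_zero) lam

/-- **(from [LZ], Remark 2.1(2)).** Let `r ∈ ℤ_{≥0}`, `λ ∈ ℂ*`, `α ∈ ℂ`, and
`V` an irreducible `L̄_r`-module. Then `M(V,Ω(λ,α))` is reducible if and only if
`V ≅ V_α`, i.e. `V` is one-dimensional with `B_0 = α·id` and `B_i = 0` for
`1 ≤ i ≤ r`. -/
theorem statement12 {V : Type*} [AddCommGroup V] [Module ℂ V]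
    (r : ℕ) (lam al : ℂ) (hlam : lam ≠ 0)
    (B : ℕ → V →ₗ[ℂ] V)
    (hBtop : ∀ i, r < i → B i = 0)
    (hBrel : ∀ i j, i ≤ r → j ≤ r →
      B i ∘ₗ B j - B j ∘ₗ B i = (((j : ℂ) - (i : ℂ)) • B (i + j) : V →ₗ[ℂ] V))
    (hVne : ∃ v : V, v ≠ 0)
    (hVirr : ∀ U : Submodule ℂ V, (∀ i, i ≤ r → ∀ w ∈ U, B i w ∈ U) → U = ⊥ ∨ U = ⊤) :
    (∃ N : Submodule ℂ (V ⊗[ℂ] Polynomial ℂ),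
        (∀ k : ℤ, ∀ x ∈ N, M1Op B r lam al k x ∈ N) ∧ N ≠ ⊥ ∧ N ≠ ⊤)
    ↔ (∃ e : V ≃ₗ[ℂ] ℂ, (∀ w : V, e (B 0 w) = al * e w) ∧
        ∀ i, 1 ≤ i → i ≤ r → ∀ w : V, e (B i w) = 0) :=
  statement12_general r lam al hlam B hBtop hBrel hVirr
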